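/- For any real r, c̄ > 0, and μ > 0, the minimum over w ∈ [0,1] of w·r² + μ(1−w)c̄²/(μ+w) equals the GNC surrogate ρ^μ_{c̄}(r), which is r² if r² ≤ (μ/(μ+1))c̄², equals 2c̄|r|√(μ(μ+1)) − μ(c̄² + r²) if (μ/(μ+1))c̄² ≤ r² ≤ ((μ+1)/μ)c̄², and equals c̄² if r² ≥ ((μ+1)/μ)c̄². The minimizer w* equals 1 in the first regime, (c̄/|r|)√(μ(μ+1)) − μ in the middle regime, and 0 in the last regime. -/

import Mathlib

open Set

/-!
Multiplying by `μ + w > 0`, the gap between the cost and the claimed minimum is, in the three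
regimes, `(1 - w) (μ c̄² - r² (μ + w))`, `w (r² (μ + w) - c̄² (μ + 1))` and the perfect square
`(|r| (μ + w) - c̄ √(μ (μ + 1)))²`. The regime inequalities make the first two nonnegative on
`[0, 1]`; they vanish at `w = 1` and `w = 0` respectively, and the square vanishes at `w*`,
which the middle-regime inequalities place in `[0, 1]`.
-/

noncomputable def outlierProcess (μ c w : ℝ) : ℝ := μ * (1 - w) * c ^ 2 / (μ + w)

noncomputable def blackRangarajanCost (μ c r w : ℝ) : ℝ := w * r ^ 2 + outlierProcess μ c w

section

variable {μ c r w : ℝ}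

theorem blackRangarajanCost_sub_sq (hw : μ + w ≠ 0) :
    blackRangarajanCost μ c r w - r ^ 2 = (1 - w) * (μ * c ^ 2 - r ^ 2 * (μ + w)) / (μ + w) := by
  unfold blackRangarajanCost outlierProcess
  field_simp
  ring

theorem blackRangarajanCost_sub_sq_threshold (hw : μ + w ≠ 0) :
    blackRangarajanCost μ c r w - c ^ 2 = w * (r ^ 2 * (μ + w) - c ^ 2 * (μ + 1)) / (μ + w) := by
  unfold blackRangarajanCost outlierProcess
  field_simp
  ring

theorem blackRangarajanCost_sub_gnc {s : ℝ} (hs : s ^ 2 = μ * (μ + 1)) (hw : μ + w ≠ 0) :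
    blackRangarajanCost μ c r w - (2 * c * |r| * s - μ * (c ^ 2 + r ^ 2)) =
      (|r| * (μ + w) - c * s) ^ 2 / (μ + w) := by
  unfold blackRangarajanCost outlierProcess
  field_simp
  linear_combination (-(c ^ 2)) * hs - (μ + w) ^ 2 * sq_abs r

theorem sq_le_blackRangarajanCost (hμ : 0 < μ) (h : r ^ 2 ≤ μ / (μ + 1) * c ^ 2)
    (hw : w ∈ Icc 0 1) : r ^ 2 ≤ blackRangarajanCost μ c r w := by
  have hpos : 0 < μ + w := by linarith [hw.1]
  have h' : r ^ 2 * (μ + 1) ≤ μ * c ^ 2 := by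
    rwa [div_mul_eq_mul_div, le_div_iff₀ (by linarith)] at h
  have hgap : 0 ≤ μ * c ^ 2 - r ^ 2 * (μ + w) := by
    nlinarith [mul_le_mul_of_nonneg_left hw.2 (sq_nonneg r)]
  rw [← sub_nonneg, blackRangarajanCost_sub_sq hpos.ne']
  exact div_nonneg (mul_nonneg (sub_nonneg.2 hw.2) hgap) hpos.le

theorem sq_threshold_le_blackRangarajanCost (hμ : 0 < μ) (h : (μ + 1) / μ * c ^ 2 < r ^ 2)
    (hw : 0 ≤ w) : c ^ 2 ≤ blackRangarajanCost μ c r w := by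
  have hpos : 0 < μ + w := by linarith
  have h' : c ^ 2 * (μ + 1) ≤ r ^ 2 * μ := by
    rw [div_mul_eq_mul_div, div_lt_iff₀ hμ] at h
    linarith
  have hgap : 0 ≤ r ^ 2 * (μ + w) - c ^ 2 * (μ + 1) := by
    nlinarith [mul_nonneg (sq_nonneg r) hw]
  rw [← sub_nonneg, blackRangarajanCost_sub_sq_threshold hpos.ne']
  exact div_nonneg (mul_nonneg hw hgap) hpos.le

theorem gnc_le_blackRangarajanCost {s : ℝ} (hs : s ^ 2 = μ * (μ + 1)) (hμ : 0 < μ) (hw : 0 ≤ w) :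
    2 * c * |r| * s - μ * (c ^ 2 + r ^ 2) ≤ blackRangarajanCost μ c r w := by
  have hpos : 0 < μ + w := by linarith
  rw [← sub_nonneg, blackRangarajanCost_sub_gnc hs hpos.ne']
  positivity

theorem blackRangarajanCost_eq_gnc {s : ℝ} (hs : s ^ 2 = μ * (μ + 1)) (hw : μ + w ≠ 0)
    (h : |r| * (μ + w) = c * s) :
    blackRangarajanCost μ c r w = 2 * c * |r| * s - μ * (c ^ 2 + r ^ 2) := by
  rw [← sub_eq_zero, blackRangarajanCost_sub_gnc hs hw, h, sub_self]
  simp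

theorem gnc_weight_mem_Icc (hc : 0 ≤ c) (hμ : 0 < μ) (h₁ : μ / (μ + 1) * c ^ 2 < r ^ 2)
    (h₂ : r ^ 2 ≤ (μ + 1) / μ * c ^ 2) :
    c / |r| * √(μ * (μ + 1)) - μ ∈ Icc 0 1 := by
  have hs : √(μ * (μ + 1)) ^ 2 = μ * (μ + 1) := Real.sq_sqrt (by positivity)
  have hr : 0 < |r| := by
    refine abs_pos.2 ?_
    rintro rfl
    exact h₁.not_ge (by rw [zero_pow two_ne_zero]; positivity)
  rw [div_mul_eq_mul_div, le_div_iff₀ (by linarith)] at h₂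
  rw [div_mul_eq_mul_div, div_lt_iff₀ (by linarith)] at h₁
  have hlow : μ * |r| ≤ c * √(μ * (μ + 1)) :=
    pow_le_pow_iff_left₀ (by positivity) (by positivity) two_ne_zero |>.1 <| by
      nlinarith [sq_abs r]
  have hupp : c * √(μ * (μ + 1)) ≤ (μ + 1) * |r| :=
    pow_le_pow_iff_left₀ (by positivity) (by positivity) two_ne_zero |>.1 <| by
      nlinarith [sq_abs r]
  rw [div_mul_eq_mul_div, mem_Icc, sub_nonneg, sub_le_iff_le_add, le_div_iff₀ hr, div_le_iff₀ hr]
  constructor <;> linarith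

end

/-- Black–Rangarajan duality for the GNC surrogate of TLS. The minimum
over `w ∈ [0,1]` of `w r² + μ(1−w)cbar²/(μ+w)` equals the piecewise GNC surrogate
`ρ^μ_{cbar}(r)`, attained at the stated closed-form minimizer `w*`. -/
theorem gnc_black_rangarajan (r cbar μ : ℝ) (hc : 0 < cbar) (hμ : 0 < μ) :
    let g : ℝ → ℝ := fun w => w * r ^ 2 + μ * (1 - w) * cbar ^ 2 / (μ + w)
    let ρ : ℝ :=
      if r ^ 2 ≤ μ / (μ + 1) * cbar ^ 2 then r ^ 2
      else if r ^ 2 ≤ (μ + 1) / μ * cbar ^ 2 then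
        2 * cbar * |r| * Real.sqrt (μ * (μ + 1)) - μ * (cbar ^ 2 + r ^ 2)
      else cbar ^ 2
    let wstar : ℝ :=
      if r ^ 2 ≤ μ / (μ + 1) * cbar ^ 2 then 1
      else if r ^ 2 ≤ (μ + 1) / μ * cbar ^ 2 then
        cbar / |r| * Real.sqrt (μ * (μ + 1)) - μ
      else 0
    IsLeast (g '' Icc (0 : ℝ) 1) ρ ∧ wstar ∈ Icc (0 : ℝ) 1 ∧ g wstar = ρ := by
  intro g ρ wstar
  suffices h : wstar ∈ Icc 0 1 ∧ g wstar = ρ ∧ ∀ w ∈ Icc (0 : ℝ) 1, ρ ≤ g w by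
    obtain ⟨hmem, hval, hle⟩ := h
    exact ⟨⟨⟨wstar, hmem, hval⟩, forall_mem_image.2 hle⟩, hmem, hval⟩
  have hs : √(μ * (μ + 1)) ^ 2 = μ * (μ + 1) := Real.sq_sqrt (by positivity)
  simp only [ρ, wstar]
  split_ifs with h₁ h₂
  · exact ⟨⟨zero_le_one, le_rfl⟩, by simp [g], fun w hw => sq_le_blackRangarajanCost hμ h₁ hw⟩
  · have hw := gnc_weight_mem_Icc hc.le hμ (not_le.1 h₁) h₂
    have hr : r ≠ 0 := by
      rintro rfl
      exact h₁ (by rw [zero_pow two_ne_zero]; positivity)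
    refine ⟨hw, blackRangarajanCost_eq_gnc hs (by linarith [hw.1]) ?_,
      fun w hw => gnc_le_blackRangarajanCost hs hμ hw.1⟩
    field_simp
    ring
  · exact ⟨⟨le_rfl, zero_le_one⟩, by simp [g, hμ.ne'],
      fun w hw => sq_threshold_le_blackRangarajanCost hμ (not_le.1 h₂) hw.1⟩
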